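/- The entries c_{i,j} of R_n^3 satisfy c_{i+1,j} = 2 c_{i,j} + 3 c_{i,j-1} - 2 c_{i+1,j-1} for all 1 ≤ i ≤ n-1 and 2 ≤ j ≤ n. -/
import Mathlib


/-- `R n` is the `n × n` integer matrix whose 1-based `(i,j)` entry is `C(i-1, n-j)`. -/
def Rmat (n : ℕ) : Matrix (Fin n) (Fin n) ℤ :=
  Matrix.of fun i j => (Nat.choose i.1 (n - 1 - j.1) : ℤ)

namespace RmatAux

/-- Entry of `R` with natural-number (0-based) indices. -/
def r (n i j : ℕ) : ℤ := (Nat.choose i (n - 1 - j) : ℤ)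

/-- Entry of `R^2`. -/
def d (n k j : ℕ) : ℤ := ∑ m ∈ Finset.range n, r n k m * r n m j

/-- Entry of `R^3`. -/
def c (n i j : ℕ) : ℤ := ∑ k ∈ Finset.range n, r n i k * d n k j

lemma pascal_r (n i k : ℕ) (hk : k + 1 < n) :
    r n (i+1) k = r n i k + r n i (k+1) := by
  unfold r
  have h1 : n - 1 - k = (n - 1 - (k+1)) + 1 := by omega
  rw [h1, Nat.choose_succ_succ]
  push_cast; ring

lemma sum_split (n i : ℕ) (hn : 1 ≤ n) (g : ℕ → ℤ) :
    ∑ k ∈ Finset.range n, r n (i+1) k * g k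
      = ∑ k ∈ Finset.range n, r n i k * g k
        + ∑ k ∈ Finset.range (n-1), r n i (k+1) * g k := by
  obtain ⟨m, rfl⟩ : ∃ m, n = m + 1 := ⟨n-1, by omega⟩
  simp only [Nat.add_sub_cancel]
  rw [Finset.sum_range_succ, Finset.sum_range_succ (fun k => r (m+1) i k * g k)]
  have hm : r (m+1) (i+1) m = r (m+1) i m := by
    unfold r; simp
  have hs : ∑ k ∈ Finset.range m, r (m+1) (i+1) k * g k
      = ∑ k ∈ Finset.range m, (r (m+1) i k * g k + r (m+1) i (k+1) * g k) := by
    apply Finset.sum_congr rfl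
    intro k hk
    rw [pascal_r (m+1) i k (by simpa using Finset.mem_range.mp hk)]
    ring
  rw [hm, hs, Finset.sum_add_distrib]
  ring

lemma col_pascal (n m J : ℕ) (hJ1 : 1 ≤ J) (hJn : J < n) :
    r n m J + r n m (J-1) = r n (m+1) (J-1) := by
  unfold r
  have h1 : n - 1 - (J-1) = (n - 1 - J) + 1 := by omega
  rw [h1, Nat.choose_succ_succ]
  push_cast; ring

lemma d_rec (n k J : ℕ) (hJ1 : 1 ≤ J) (hJn : J < n) :
    d n (k+1) J + d n (k+1) (J-1) = d n k J + 2 * d n k (J-1) := by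
  have hn : 1 ≤ n := by omega
  unfold d
  rw [sum_split n k hn (fun m => r n m J), sum_split n k hn (fun m => r n m (J-1))]
  have hextra : ∑ m ∈ Finset.range (n-1), r n k (m+1) * r n m J
      + ∑ m ∈ Finset.range (n-1), r n k (m+1) * r n m (J-1)
      = ∑ m ∈ Finset.range n, r n k m * r n m (J-1) := by
    rw [← Finset.sum_add_distrib]
    have h1 : ∑ m ∈ Finset.range (n-1), (r n k (m+1) * r n m J + r n k (m+1) * r n m (J-1))
        = ∑ m ∈ Finset.range (n-1), r n k (m+1) * r n (m+1) (J-1) := by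
      apply Finset.sum_congr rfl
      intro m _
      rw [← col_pascal n m J hJ1 hJn]
      ring
    rw [h1]
    obtain ⟨m0, rfl⟩ : ∃ m0, n = m0 + 1 := ⟨n-1, by omega⟩
    simp only [Nat.add_sub_cancel]
    rw [Finset.sum_range_succ' (fun m => r (m0+1) k m * r (m0+1) m (J-1)) m0]
    have h0 : r (m0+1) 0 (J-1) = 0 := by
      unfold r
      rw [Nat.choose_eq_zero_of_lt (by omega)]
      simp
    rw [h0]
    ring
  linarith [hextra]

lemma key (n I J : ℕ) (hn : 2 ≤ n) (hI1 : 1 ≤ I) (hIn : I ≤ n - 1)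
    (hJ1 : 1 ≤ J) (hJn : J < n) :
    c n I J + 2 * c n I (J-1) = 2 * c n (I-1) J + 3 * c n (I-1) (J-1) := by
  obtain ⟨i0, rfl⟩ : ∃ i0, I = i0 + 1 := ⟨I-1, by omega⟩
  simp only [Nat.add_sub_cancel]
  unfold c
  rw [sum_split n i0 (by omega) (fun k => d n k J),
    sum_split n i0 (by omega) (fun k => d n k (J-1))]
  have hkey : ∑ k ∈ Finset.range (n-1), r n i0 (k+1) * d n k J
      + 2 * ∑ k ∈ Finset.range (n-1), r n i0 (k+1) * d n k (J-1)
      = ∑ k ∈ Finset.range n, r n i0 k * d n k J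
        + ∑ k ∈ Finset.range n, r n i0 k * d n k (J-1) := by
    have h1 : ∑ k ∈ Finset.range (n-1), r n i0 (k+1) * d n k J
        + 2 * ∑ k ∈ Finset.range (n-1), r n i0 (k+1) * d n k (J-1)
        = ∑ k ∈ Finset.range (n-1),
            (r n i0 (k+1) * d n (k+1) J + r n i0 (k+1) * d n (k+1) (J-1)) := by
      rw [Finset.mul_sum, ← Finset.sum_add_distrib]
      apply Finset.sum_congr rfl
      intro k _
      have h := d_rec n k J hJ1 hJn
      linear_combination (-(r n i0 (k+1))) * h
    rw [h1]
    obtain ⟨m0, hm0⟩ : ∃ m0, n = m0 + 1 := ⟨n-1, by omega⟩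
    subst hm0
    simp only [Nat.add_sub_cancel]
    rw [Finset.sum_range_succ' (fun k => r (m0+1) i0 k * d (m0+1) k J) m0,
      Finset.sum_range_succ' (fun k => r (m0+1) i0 k * d (m0+1) k (J-1)) m0]
    have h0 : r (m0+1) i0 0 = 0 := by
      unfold r
      rw [Nat.choose_eq_zero_of_lt (by omega)]
      simp
    rw [h0, Finset.sum_add_distrib]
    ring
  linarith [hkey]

lemma cube_apply (n : ℕ) (a b : Fin n) :
    (Rmat n ^ 3) a b = c n a.1 b.1 := by
  have h3 : Rmat n ^ 3 = Rmat n * (Rmat n * Rmat n) := by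
    rw [pow_succ, pow_succ, pow_one, Matrix.mul_assoc]
  have hd : ∀ k : Fin n, (Rmat n * Rmat n) k b = d n k.1 b.1 := by
    intro k
    rw [Matrix.mul_apply, d, ← Fin.sum_univ_eq_sum_range (fun m => r n k.1 m * r n m b.1) n]
    rfl
  rw [h3, Matrix.mul_apply, c,
    ← Fin.sum_univ_eq_sum_range (fun k => r n a.1 k * d n k b.1) n]
  apply Finset.sum_congr rfl
  intro k _
  rw [hd k]
  rfl

end RmatAux

/-- The entries `c_{i,j}` of `R_n ^ 3` satisfy
`c_{i+1,j} = 2 c_{i,j} + 3 c_{i,j-1} - 2 c_{i+1,j-1}` for `1 ≤ i ≤ n-1`, `2 ≤ j ≤ n`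
(1-based indexing). -/
theorem Rmat_cube_recurrence (n : ℕ) (hn : 2 ≤ n) (i j : ℕ)
    (hi1 : 1 ≤ i) (hin : i ≤ n - 1) (hj2 : 2 ≤ j) (hjn : j ≤ n) :
    (Rmat n ^ 3) ⟨i, by omega⟩ ⟨j - 1, by omega⟩ =
      2 * (Rmat n ^ 3) ⟨i - 1, by omega⟩ ⟨j - 1, by omega⟩
        + 3 * (Rmat n ^ 3) ⟨i - 1, by omega⟩ ⟨j - 2, by omega⟩
        - 2 * (Rmat n ^ 3) ⟨i, by omega⟩ ⟨j - 2, by omega⟩ := by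
  rw [RmatAux.cube_apply, RmatAux.cube_apply, RmatAux.cube_apply, RmatAux.cube_apply]
  have hkey := RmatAux.key n i (j-1) hn hi1 hin (by omega) (by omega)
  have hj12 : j - 1 - 1 = j - 2 := by omega
  rw [hj12] at hkey
  linarith [hkey]
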